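/- arXiv:1706.02212 — 3 statements merged into one kernel-verified Lean document; each statement's English description precedes it below -/
import Mathlib

section
/- Let d ≥ 1, σ a state on ℂ^d, ε ∈ (0,1], and let φ be a Schur concave real-valued function on the set of states on ℂ^d. Then ρ*_ε(σ) maximizes φ over B_ε(σ) and ρ_{*,ε}(σ) minimizes φ over B_ε(σ). If φ is strictly Schur concave, then every maximizer of φ over B_ε(σ) is unitarily equivalent to ρ*_ε(σ) and every minimizer is unitarily equivalent to ρ_{*,ε}(σ). If φ is in addition strictly concave (as a function on the convex set of states), then ρ*_ε(σ) is the unique maximizer of φ over B_ε(σ). -/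
open scoped BigOperators ComplexOrder

noncomputable section

/-- A quantum state on `ℂ^d`: a positive semidefinite `d × d` complex matrix of trace 1. -/
def MState (d : ℕ) : Type :=
  {m : Matrix (Fin d) (Fin d) ℂ // m.PosSemidef ∧ m.trace = 1}

/-- Eigenvalues of a matrix (junk value `0` if the matrix is not Hermitian). -/
noncomputable def eigs {d : ℕ} (A : Matrix (Fin d) (Fin d) ℂ) : Fin d → ℝ :=
  if h : A.IsHermitian then h.eigenvalues else 0

/-- The trace norm of a Hermitian matrix: the sum of the absolute values of its eigenvalues. -/
noncomputable def traceNorm {d : ℕ} (A : Matrix (Fin d) (Fin d) ℂ) : ℝ :=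
  ∑ i, |eigs A i|

/-- Membership in the ε-ball (in trace distance) around the state `σ`:
`ω ∈ B_ε(σ) ↔ (1/2)‖ω − σ‖₁ ≤ ε`. -/
def inBall {d : ℕ} (ε : ℝ) (σ ω : MState d) : Prop :=
  (1 / 2 : ℝ) * traceNorm (ω.1 - σ.1) ≤ ε

/-- Sum of the `k` largest entries of a vector (counted with multiplicity). -/
noncomputable def kMaxSum {d : ℕ} (v : Fin d → ℝ) (k : ℕ) : ℝ :=
  sSup ((fun s : Finset (Fin d) => ∑ i ∈ s, v i) '' {s | s.card = k})

/-- Vector majorization `x ≺ y`: for each `k = 1, …, d` the sum of the `k` largest entries of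
`x` is at most that of `y`, with equality at `k = d`. -/
def vMaj {d : ℕ} (x y : Fin d → ℝ) : Prop :=
  (∀ k, 1 ≤ k → k ≤ d → kMaxSum x k ≤ kMaxSum y k) ∧ kMaxSum x d = kMaxSum y d

/-- State majorization `ρ ≺ σ` (majorization of the eigenvalue vectors). -/
def Maj {d : ℕ} (ρ σ : MState d) : Prop :=
  vMaj (eigs ρ.1) (eigs σ.1)

/-- Two states are unitarily equivalent iff they have the same eigenvalues with the same
multiplicities. -/
def UnitarilyEquiv {d : ℕ} (ρ σ : MState d) : Prop :=
  ∃ π : Equiv.Perm (Fin d), eigs ρ.1 = eigs σ.1 ∘ π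

/-- The von Neumann entropy (base 2): the Shannon entropy of the eigenvalues. -/
noncomputable def vnEnt {d : ℕ} (ρ : MState d) : ℝ :=
  -∑ i, eigs ρ.1 i * Real.logb 2 (eigs ρ.1 i)

/-- The completely mixed state matrix `(1/d)·I`. -/
noncomputable def mixedMat (d : ℕ) : Matrix (Fin d) (Fin d) ℂ :=
  ((d : ℂ)⁻¹) • 1

/-- `φ` is Schur concave: `ρ ≺ σ` implies `φ(ρ) ≥ φ(σ)`. -/
def SchurConcave {d : ℕ} (φ : MState d → ℝ) : Prop :=
  ∀ ρ σ : MState d, Maj ρ σ → φ σ ≤ φ ρ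

/-- `φ` is strictly Schur concave: `φ(ρ) > φ(σ)` whenever `ρ ≺ σ` and `ρ` is not unitarily
equivalent to `σ`. -/
def StrictSchurConcave {d : ℕ} (φ : MState d → ℝ) : Prop :=
  ∀ ρ σ : MState d, Maj ρ σ → ¬ UnitarilyEquiv ρ σ → φ σ < φ ρ

/-- `φ` is strictly concave on the convex set of states. -/
def StrictConcaveOnStates {d : ℕ} (φ : MState d → ℝ) : Prop :=
  ∀ (ρ σ τ : MState d) (t : ℝ), 0 < t → t < 1 → ρ.1 ≠ σ.1 →
    τ.1 = t • ρ.1 + (1 - t) • σ.1 → t * φ ρ + (1 - t) * φ σ < φ τ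

/-! Schur concavity turns the majorization extremality of `ρ*_ε(σ)` and `ρ_{*,ε}(σ)` directly
into optimality, and strict Schur concavity forces any other optimizer to have the same spectrum.
For uniqueness under strict concavity, the ball is convex because the trace norm is: for
`P, Q ≥ 0` and `S = sign (P - Q)` one has `‖P - Q‖₁ = tr ((P - Q) S) ≤ tr P + tr Q` as
`-1 ≤ S ≤ 1`, with equality for the splitting `X = X⁺ - X⁻`. Two distinct maximizers would
then have a midpoint in the ball with strictly larger value. -/

open Matrix
open scoped MatrixOrder

namespace Matrix

variable {n 𝕜 : Type*} [Fintype n] [DecidableEq n] [RCLike 𝕜] {A P T : Matrix n n 𝕜}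

lemma IsHermitian.trace_cfc (hA : A.IsHermitian) (f : ℝ → ℝ) :
    (cfc f A).trace = ∑ i, (f (hA.eigenvalues i) : 𝕜) := by
  rw [hA.cfc_eq, IsHermitian.cfc, Unitary.conjStarAlgAut_apply, trace_mul_cycle,
    Unitary.coe_star_mul_self, one_mul, trace_diagonal]
  rfl

lemma PosSemidef.trace_mul_nonneg (hP : P.PosSemidef) (hT : T.PosSemidef) :
    0 ≤ (P * T).trace := by
  have hsqrt : P = CFC.sqrt P * CFC.sqrt P := (CFC.sqrt_mul_sqrt_self P hP.nonneg).symm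
  rw [hsqrt, Matrix.mul_assoc, trace_mul_comm]
  have := conjugate_nonneg_of_nonneg hT.nonneg (CFC.sqrt_nonneg P)
  exact (nonneg_iff_posSemidef.mp this).trace_nonneg

lemma PosSemidef.trace_mul_le_trace (hP : P.PosSemidef) (hT : T ≤ 1) :
    (P * T).trace ≤ P.trace := by
  have := hP.trace_mul_nonneg hT
  rwa [Matrix.mul_sub, Matrix.mul_one, trace_sub, sub_nonneg] at this

end Matrix

variable {d : ℕ}

lemma traceNorm_eq_trace_abs {A : Matrix (Fin d) (Fin d) ℂ} (hA : A.IsHermitian) :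
    (traceNorm A : ℂ) = (CFC.abs A).trace := by
  rw [CFC.abs_eq_cfc_norm A hA.isSelfAdjoint, hA.trace_cfc, traceNorm, eigs, dif_pos hA]
  push_cast
  rfl

lemma traceNorm_sub_le {P Q : Matrix (Fin d) (Fin d) ℂ} (hP : P.PosSemidef) (hQ : Q.PosSemidef) :
    (traceNorm (P - Q) : ℂ) ≤ P.trace + Q.trace := by
  set A := P - Q
  have hA : A.IsHermitian := hP.isHermitian.sub hQ.isHermitian
  have hcont : ∀ f : ℝ → ℝ, ContinuousOn f (spectrum ℝ A) := A.finite_real_spectrum.continuousOn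
  set S := cfc (fun x : ℝ => (SignType.sign x : ℝ)) A
  have habs : CFC.abs A = A * S := by
    rw [CFC.abs_eq_cfc_norm A hA.isSelfAdjoint]
    nth_rw 2 [← cfc_id' ℝ A hA.isSelfAdjoint]
    rw [← cfc_mul _ _ A (hcont _) (hcont _)]
    simp only [Real.norm_eq_abs, self_mul_sign]
  have hsign (x : ℝ) : |(SignType.sign x : ℝ)| ≤ 1 := by
    rcases lt_trichotomy x 0 with hx | rfl | hx <;> simp [*]
  have hS : S ≤ 1 := cfc_le_one _ A fun x _ => (abs_le.mp (hsign x)).2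
  have hnegS : -S ≤ 1 := by
    rw [← cfc_neg]
    exact cfc_le_one _ A fun x _ => neg_le.mp (abs_le.mp (hsign x)).1
  rw [traceNorm_eq_trace_abs hA, habs]
  calc (A * S).trace = (P * S).trace + (Q * -S).trace := by
        rw [Matrix.sub_mul, Matrix.mul_neg, trace_sub, trace_neg, sub_eq_add_neg]
    _ ≤ P.trace + Q.trace := add_le_add (hP.trace_mul_le_trace hS) (hQ.trace_mul_le_trace hnegS)

lemma traceNorm_smul_add_smul_le {X Y : Matrix (Fin d) (Fin d) ℂ} (hX : X.IsHermitian)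
    (hY : Y.IsHermitian) {t : ℝ} (ht₀ : 0 ≤ t) (ht₁ : t ≤ 1) :
    traceNorm (t • X + (1 - t) • Y) ≤ t * traceNorm X + (1 - t) * traceNorm Y := by
  have hdecomp : t • X + (1 - t) • Y = (t • X⁺ + (1 - t) • Y⁺) - (t • X⁻ + (1 - t) • Y⁻) := by
    nth_rw 1 [← CFC.posPart_sub_negPart X hX.isSelfAdjoint,
      ← CFC.posPart_sub_negPart Y hY.isSelfAdjoint]
    module
  have hpos : (t • X⁺ + (1 - t) • Y⁺).PosSemidef := nonneg_iff_posSemidef.mp <|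
    add_nonneg (smul_nonneg ht₀ (CFC.posPart_nonneg X))
      (smul_nonneg (sub_nonneg.mpr ht₁) (CFC.posPart_nonneg Y))
  have hneg : (t • X⁻ + (1 - t) • Y⁻).PosSemidef := nonneg_iff_posSemidef.mp <|
    add_nonneg (smul_nonneg ht₀ (CFC.negPart_nonneg X))
      (smul_nonneg (sub_nonneg.mpr ht₁) (CFC.negPart_nonneg Y))
  have htrace : (t • X⁺ + (1 - t) • Y⁺).trace + (t • X⁻ + (1 - t) • Y⁻).trace
      = ((t * traceNorm X + (1 - t) * traceNorm Y : ℝ) : ℂ) := by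
    push_cast
    rw [traceNorm_eq_trace_abs hX, traceNorm_eq_trace_abs hY,
      ← CFC.posPart_add_negPart X hX.isSelfAdjoint, ← CFC.posPart_add_negPart Y hY.isSelfAdjoint]
    simp only [trace_add, trace_smul, Complex.real_smul]
    push_cast
    ring
  have h := traceNorm_sub_le hpos hneg
  rw [← hdecomp, htrace] at h
  exact_mod_cast h

lemma UnitarilyEquiv.symm {ρ σ : MState d} (h : UnitarilyEquiv ρ σ) : UnitarilyEquiv σ ρ := by
  obtain ⟨π, hπ⟩ := h
  exact ⟨π.symm, by rw [hπ, Function.comp_assoc, π.self_comp_symm, Function.comp_id]⟩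

lemma StrictSchurConcave.unitarilyEquiv_of_le {φ : MState d → ℝ} (hφ : StrictSchurConcave φ)
    {ρ σ : MState d} (hρσ : Maj ρ σ) (hle : φ ρ ≤ φ σ) : UnitarilyEquiv ρ σ := by
  by_contra h
  exact (hφ ρ σ hρσ h).not_ge hle

namespace MState

def mix (t : unitInterval) (ρ σ : MState d) : MState d :=
  ⟨(t : ℝ) • ρ.1 + (1 - (t : ℝ)) • σ.1,
    nonneg_iff_posSemidef.mp <| add_nonneg (smul_nonneg t.2.1 ρ.2.1.nonneg)
      (smul_nonneg (sub_nonneg.mpr t.2.2) σ.2.1.nonneg),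
    by simp [trace_add, trace_smul, ρ.2.2, σ.2.2]⟩

end MState

lemma inBall_mix {ε : ℝ} {σ ρ τ : MState d} (t : unitInterval) (hρ : inBall ε σ ρ)
    (hτ : inBall ε σ τ) : inBall ε σ (MState.mix t ρ τ) := by
  have hdiff : (MState.mix t ρ τ).1 - σ.1
      = (t : ℝ) • (ρ.1 - σ.1) + (1 - (t : ℝ)) • (τ.1 - σ.1) := by
    simp only [MState.mix]
    module
  have h := traceNorm_smul_add_smul_le (ρ.2.1.isHermitian.sub σ.2.1.isHermitian)
    (τ.2.1.isHermitian.sub σ.2.1.isHermitian) t.2.1 t.2.2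
  unfold inBall at *
  rw [hdiff]
  nlinarith [mul_le_mul_of_nonneg_left hρ t.2.1,
    mul_le_mul_of_nonneg_left hτ (sub_nonneg.mpr t.2.2)]

lemma StrictConcaveOnStates.eq_of_forall_le {φ : MState d → ℝ} (hφ : StrictConcaveOnStates φ)
    {s : Set (MState d)} (hs : ∀ t ρ τ, ρ ∈ s → τ ∈ s → MState.mix t ρ τ ∈ s) {ρ τ : MState d}
    (hρ : ρ ∈ s) (hτ : τ ∈ s) (hρmax : ∀ ω ∈ s, φ ω ≤ φ ρ) (hτmax : ∀ ω ∈ s, φ ω ≤ φ τ) :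
    ρ = τ := by
  by_contra hne
  let half : unitInterval := ⟨2⁻¹, by norm_num, by norm_num⟩
  have hlt := hφ ρ τ (MState.mix half ρ τ) 2⁻¹ (by norm_num) (by norm_num)
    (fun h => hne (Subtype.ext h)) rfl
  have hρτ : φ ρ = φ τ := le_antisymm (hτmax ρ hρ) (hρmax τ hτ)
  have := hρmax _ (hs half ρ τ hρ hτ)
  rw [hρτ] at hlt this
  linarith

theorem schurConcave_max_min_on_ball_general
    {d : ℕ} (σ : MState d) (ε : ℝ)
    (ρstar ρlow : MState d)
    (hρstar : inBall ε σ ρstar ∧ ∀ ω : MState d, inBall ε σ ω → Maj ρstar ω)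
    (hρlow : inBall ε σ ρlow ∧ ∀ ω : MState d, inBall ε σ ω → Maj ω ρlow)
    (φ : MState d → ℝ) (hφ : SchurConcave φ) :
    (∀ ω : MState d, inBall ε σ ω → φ ω ≤ φ ρstar) ∧
    (∀ ω : MState d, inBall ε σ ω → φ ρlow ≤ φ ω) ∧
    (StrictSchurConcave φ →
      (∀ ω : MState d, inBall ε σ ω →
        (∀ ω' : MState d, inBall ε σ ω' → φ ω' ≤ φ ω) → UnitarilyEquiv ω ρstar) ∧
      (∀ ω : MState d, inBall ε σ ω →
        (∀ ω' : MState d, inBall ε σ ω' → φ ω ≤ φ ω') → UnitarilyEquiv ω ρlow)) ∧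
    (StrictSchurConcave φ → StrictConcaveOnStates φ →
      ∀ ω : MState d, inBall ε σ ω →
        (∀ ω' : MState d, inBall ε σ ω' → φ ω' ≤ φ ω) → ω = ρstar) := by
  obtain ⟨hρstar_mem, hρstar_maj⟩ := hρstar
  obtain ⟨hρlow_mem, hρlow_maj⟩ := hρlow
  have hρstar_max : ∀ ω, inBall ε σ ω → φ ω ≤ φ ρstar := fun ω hω => hφ _ _ (hρstar_maj ω hω)
  refine ⟨hρstar_max, fun ω hω => hφ _ _ (hρlow_maj ω hω), fun hstrict => ⟨?_, ?_⟩, ?_⟩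
  · intro ω hω hω_max
    exact (hstrict.unitarilyEquiv_of_le (hρstar_maj ω hω) (hω_max _ hρstar_mem)).symm
  · intro ω hω hω_min
    exact hstrict.unitarilyEquiv_of_le (hρlow_maj ω hω) (hω_min _ hρlow_mem)
  · intro _ hconc ω hω hω_max
    exact hconc.eq_of_forall_le (s := {ω | inBall ε σ ω}) (fun t _ _ => inBall_mix t)
      hω hρstar_mem hω_max hρstar_max

/-- `ρ*_ε(σ)` maximizes and `ρ_{*,ε}(σ)` minimizes any Schur concave `φ`
over `B_ε(σ)`; for strictly Schur concave `φ` all maximizers (resp. minimizers) are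
unitarily equivalent to `ρ*_ε(σ)` (resp. `ρ_{*,ε}(σ)`); if `φ` is in addition strictly
concave then `ρ*_ε(σ)` is the unique maximizer. -/
theorem schurConcave_max_min_on_ball
    {d : ℕ} (hd : 1 ≤ d) (σ : MState d) (ε : ℝ) (hε : ε ∈ Set.Ioc (0 : ℝ) 1)
    (ρstar ρlow : MState d)
    (hρstar : inBall ε σ ρstar ∧ ∀ ω : MState d, inBall ε σ ω → Maj ρstar ω)
    (hρlow : inBall ε σ ρlow ∧ ∀ ω : MState d, inBall ε σ ω → Maj ω ρlow)
    (φ : MState d → ℝ) (hφ : SchurConcave φ) :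
    (∀ ω : MState d, inBall ε σ ω → φ ω ≤ φ ρstar) ∧
    (∀ ω : MState d, inBall ε σ ω → φ ρlow ≤ φ ω) ∧
    (StrictSchurConcave φ →
      (∀ ω : MState d, inBall ε σ ω →
        (∀ ω' : MState d, inBall ε σ ω' → φ ω' ≤ φ ω) → UnitarilyEquiv ω ρstar) ∧
      (∀ ω : MState d, inBall ε σ ω →
        (∀ ω' : MState d, inBall ε σ ω' → φ ω ≤ φ ω') → UnitarilyEquiv ω ρlow)) ∧
    (StrictSchurConcave φ → StrictConcaveOnStates φ →
      ∀ ω : MState d, inBall ε σ ω →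
        (∀ ω' : MState d, inBall ε σ ω' → φ ω' ≤ φ ω) → ω = ρstar) :=
  schurConcave_max_min_on_ball_general σ ε ρstar ρlow hρstar hρlow φ hφ
end
end

section
/- Let d ≥ 1, σ a state on ℂ^d and ε ∈ (0,1]. Then for every state ω ∈ B_ε(σ): S(ρ_{*,ε}(σ)) ≤ S(ω) ≤ S(ρ*_ε(σ)), and consequently |S(ω) − S(σ)| ≤ max{ S(ρ*_ε(σ)) − S(σ), S(σ) − S(ρ_{*,ε}(σ)) }. -/
/-!
The bounds on `S(ω)` are the Schur concavity of the Shannon entropy, `x ≺ y → H(y) ≤ H(x)`,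
and they give the bound on `|S(ω) - S(σ)|` at once. Schur concavity is proved in the style of
Hardy–Littlewood–Pólya: sort `x` and `y` decreasingly; the tangent line of `t ↦ t log t` at `xᵢ`
bounds `yᵢ log yᵢ - xᵢ log xᵢ` below by `cᵢ (yᵢ - xᵢ)` with `cᵢ` decreasing, and Abel summation
against the nonnegative partial sums of `y - x` (which add up to `0`) gives `∑ cᵢ (yᵢ - xᵢ) ≥ 0`.
-/

open scoped BigOperators ComplexOrder

noncomputable section

open Finset Real

theorem sum_range_mul_nonneg_of_antitoneOn {n : ℕ} {c a : ℕ → ℝ} (hc : AntitoneOn c (Set.Iio n))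
    (ha : ∀ k ≤ n, 0 ≤ ∑ i ∈ range k, a i) (htot : ∑ i ∈ range n, a i = 0) :
    0 ≤ ∑ i ∈ range n, c i * a i := by
  have hterm : ∀ i ∈ range (n - 1), (c (i + 1) - c i) * ∑ j ∈ range (i + 1), a j ≤ 0 := by
    intro i hi
    have hi : i + 1 < n := by rw [mem_range] at hi; omega
    refine mul_nonpos_of_nonpos_of_nonneg ?_ (ha _ hi.le)
    exact sub_nonpos.2 (hc (Set.mem_Iio.2 (by omega)) (Set.mem_Iio.2 hi) (Nat.le_succ i))
  have hparts := sum_range_by_parts c a n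
  simp only [smul_eq_mul, htot, mul_zero, zero_sub] at hparts
  rw [hparts, neg_nonneg]
  exact sum_nonpos hterm

theorem Real.log_add_one_mul_sub_le {a b : ℝ} (ha : 0 < a) (hb : 0 ≤ b) :
    (log a + 1) * (b - a) ≤ b * log b - a * log a := by
  rcases hb.eq_or_lt with rfl | hb
  · simp only [zero_sub, zero_mul, log_zero]
    nlinarith
  · have h := mul_le_mul_of_nonneg_left (log_le_sub_one_of_pos (div_pos ha hb)) hb.le
    rw [log_div ha.ne' hb.ne', mul_sub_one, mul_div_cancel₀ _ hb.ne'] at h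
    nlinarith

theorem eq_zero_of_sum_range_le_of_eq_zero {n i : ℕ} {x y : ℕ → ℝ} (hx : ∀ j, 0 ≤ x j)
    (hy : ∀ j, 0 ≤ y j) (hxa : AntitoneOn x (Set.Iio n))
    (hpre : ∑ j ∈ range i, x j ≤ ∑ j ∈ range i, y j)
    (htot : ∑ j ∈ range n, x j = ∑ j ∈ range n, y j) (hi : i < n) (hxi : x i = 0) : y i = 0 := by
  have hxtail : ∑ j ∈ Ico i n, x j = 0 := by
    refine sum_eq_zero fun j hj => le_antisymm ?_ (hx j)
    rw [mem_Ico] at hj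
    exact hxi ▸ hxa (Set.mem_Iio.2 hi) (Set.mem_Iio.2 hj.2) hj.1
  have hytail : ∑ j ∈ Ico i n, y j ≤ 0 := by
    linarith [sum_range_add_sum_Ico x hi.le, sum_range_add_sum_Ico y hi.le]
  have hytail' := le_antisymm hytail (sum_nonneg fun j _ => hy j)
  exact (sum_eq_zero_iff_of_nonneg fun j _ => hy j).1 hytail' i (mem_Ico.2 ⟨le_rfl, hi⟩)

theorem sum_range_mul_log_le {n : ℕ} {x y : ℕ → ℝ} (hx : ∀ i, 0 ≤ x i) (hy : ∀ i, 0 ≤ y i)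
    (hxa : AntitoneOn x (Set.Iio n)) (hpre : ∀ k ≤ n, ∑ i ∈ range k, x i ≤ ∑ i ∈ range k, y i)
    (htot : ∑ i ∈ range n, x i = ∑ i ∈ range n, y i) :
    ∑ i ∈ range n, x i * log (x i) ≤ ∑ i ∈ range n, y i * log (y i) := by
  -- `cᵢ` is the slope of `t log t` at `xᵢ` where `xᵢ > 0`; on the zero tail of `x`, where `y`
  -- vanishes too, any value below all of these slopes keeps `c` antitone.
  set L := -∑ j ∈ range n, |log (x j) + 1|
  set c : ℕ → ℝ := fun i => if 0 < x i then log (x i) + 1 else L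
  have hL : ∀ i < n, L ≤ log (x i) + 1 := fun i hi =>
    (neg_abs_le _).trans' (neg_le_neg (single_le_sum (f := fun j => |log (x j) + 1|)
      (fun j _ => abs_nonneg _) (mem_range.2 hi)))
  have hc : AntitoneOn c (Set.Iio n) := by
    intro i hi j hj hij
    by_cases hxj : 0 < x j
    · have hxij := hxa hi hj hij
      simp only [c, if_pos hxj, if_pos (hxj.trans_le hxij)]
      gcongr
    · simp only [c, if_neg hxj]
      split_ifs
      exacts [hL i hi, le_rfl]
  have htangent : ∀ i ∈ range n, c i * (y i - x i) ≤ y i * log (y i) - x i * log (x i) := by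
    intro i hi
    rw [mem_range] at hi
    by_cases hxi : 0 < x i
    · simpa only [c, if_pos hxi] using log_add_one_mul_sub_le hxi (hy i)
    · have hxi : x i = 0 := le_antisymm (not_lt.1 hxi) (hx i)
      have hyi := eq_zero_of_sum_range_le_of_eq_zero hx hy hxa (hpre i hi.le) htot hi hxi
      simp [hxi, hyi]
  have habel := sum_range_mul_nonneg_of_antitoneOn hc (a := fun i => y i - x i)
    (fun k hk => by simpa [sum_sub_distrib] using hpre k hk) (by simp [sum_sub_distrib, htot])
  have hsum := habel.trans (sum_le_sum htangent)
  rw [sum_sub_distrib] at hsum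
  linarith

theorem sum_le_sum_range_card_of_antitoneOn {d : ℕ} {s : ℕ → ℝ} (hs : AntitoneOn s (Set.Iio d))
    {T : Finset ℕ} (hT : T ⊆ range d) : ∑ n ∈ T, s n ≤ ∑ n ∈ range #T, s n := by
  have hTd : #T ≤ d := by simpa using card_le_card hT
  rw [← sum_sdiff_le_sum_sdiff]
  -- `s (#T - 1)` separates the values of `s` on `T \ range #T` from those on `range #T \ T`.
  calc ∑ n ∈ T \ range #T, s n ≤ #(T \ range #T) • s (#T - 1) := by
        refine sum_le_card_nsmul _ _ _ fun n hn => ?_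
        obtain ⟨hnT, hn⟩ := mem_sdiff.1 hn
        have hnd := mem_range.1 (hT hnT)
        have hn : #T ≤ n := by simpa using hn
        exact hs (Set.mem_Iio.2 (by omega)) (Set.mem_Iio.2 hnd) (by omega)
    _ = #(range #T \ T) • s (#T - 1) := by rw [card_sdiff_comm (card_range _).symm]
    _ ≤ ∑ n ∈ range #T \ T, s n := by
        refine card_nsmul_le_sum _ _ _ fun n hn => ?_
        have hn := mem_range.1 (mem_sdiff.1 hn).1
        exact hs (Set.mem_Iio.2 (by omega)) (Set.mem_Iio.2 (by omega)) (by omega)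

section Sorting

variable {d : ℕ}

def descPerm (v : Fin d → ℝ) : Equiv.Perm (Fin d) :=
  Fin.revPerm.trans (Tuple.sort v)

def sortDesc (v : Fin d → ℝ) (n : ℕ) : ℝ :=
  if h : n < d then v (descPerm v ⟨n, h⟩) else 0

theorem sortDesc_val (v : Fin d → ℝ) (i : Fin d) : sortDesc v i = v (descPerm v i) :=
  dif_pos i.isLt

theorem sortDesc_nonneg {v : Fin d → ℝ} (hv : ∀ i, 0 ≤ v i) (n : ℕ) : 0 ≤ sortDesc v n := by
  unfold sortDesc
  split_ifs
  exacts [hv _, le_rfl]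

theorem antitoneOn_sortDesc (v : Fin d → ℝ) : AntitoneOn (sortDesc v) (Set.Iio d) := by
  intro m hm n hn hmn
  rw [Set.mem_Iio] at hm hn
  simp only [sortDesc, dif_pos hm, dif_pos hn]
  exact Tuple.monotone_sort v (Fin.rev_le_rev.2 hmn)

theorem sum_range_sortDesc (v : Fin d → ℝ) (g : ℝ → ℝ) :
    ∑ n ∈ range d, g (sortDesc v n) = ∑ i, g (v i) := by
  rw [← Fin.sum_univ_eq_sum_range (fun n => g (sortDesc v n))]
  simp only [sortDesc_val]
  exact Equiv.sum_comp (descPerm v) (fun i => g (v i))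

theorem sum_image_sortDesc (v : Fin d → ℝ) (t : Finset (Fin d)) :
    ∑ n ∈ t.image (fun i => ((descPerm v).symm i : ℕ)), sortDesc v n = ∑ i ∈ t, v i := by
  rw [sum_image fun i _ j _ h => (descPerm v).symm.injective (Fin.ext h)]
  simp only [sortDesc_val, Equiv.apply_symm_apply]

theorem kMaxSum_eq_sum_range_sortDesc (v : Fin d → ℝ) {k : ℕ} (hk : k ≤ d) :
    kMaxSum v k = ∑ n ∈ range k, sortDesc v n := by
  set e : Fin d → ℕ := fun i => ((descPerm v).symm i : ℕ)
  have he : e.Injective := fun i j h => (descPerm v).symm.injective (Fin.ext h)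
  have himage : ((range k).preimage e he.injOn).image e = range k := by
    rw [image_preimage, filter_true_of_mem]
    intro n hn
    exact ⟨descPerm v ⟨n, by simp at hn; omega⟩, by simp [e]⟩
  refine IsGreatest.csSup_eq ⟨⟨(range k).preimage e he.injOn, ?_, ?_⟩, ?_⟩
  · rw [Set.mem_ofPred_eq, ← card_image_of_injective _ he, himage, card_range]
  · exact (sum_image_sortDesc v _).symm.trans (by rw [himage])
  · rintro _ ⟨t, ht : #t = k, rfl⟩
    show ∑ i ∈ t, v i ≤ _
    rw [← sum_image_sortDesc]
    simpa [card_image_of_injective _ he, ht] using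
      sum_le_sum_range_card_of_antitoneOn (antitoneOn_sortDesc v) (T := t.image e)
        (image_subset_iff.2 fun i _ => mem_range.2 (Fin.isLt _))

end Sorting

theorem sum_mul_logb_le_of_vMaj {d : ℕ} {x y : Fin d → ℝ} (hx : ∀ i, 0 ≤ x i)
    (hy : ∀ i, 0 ≤ y i) (h : vMaj x y) :
    ∑ i, x i * logb 2 (x i) ≤ ∑ i, y i * logb 2 (y i) := by
  have hsorted : ∑ n ∈ range d, sortDesc x n * log (sortDesc x n) ≤
      ∑ n ∈ range d, sortDesc y n * log (sortDesc y n) := by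
    refine sum_range_mul_log_le (sortDesc_nonneg hx) (sortDesc_nonneg hy)
      (antitoneOn_sortDesc x) (fun k hk => ?_) ?_
    · rcases Nat.eq_zero_or_pos k with rfl | hk0
      · simp
      · rw [← kMaxSum_eq_sum_range_sortDesc x hk, ← kMaxSum_eq_sum_range_sortDesc y hk]
        exact h.1 k hk0 hk
    · rw [← kMaxSum_eq_sum_range_sortDesc x le_rfl, ← kMaxSum_eq_sum_range_sortDesc y le_rfl]
      exact h.2
  simp only [logb, ← mul_div_assoc, ← sum_div]
  rw [← sum_range_sortDesc x (fun t => t * log t), ← sum_range_sortDesc y (fun t => t * log t)]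
  exact div_le_div_of_nonneg_right hsorted (log_pos one_lt_two).le

theorem eigs_nonneg {d : ℕ} (ρ : MState d) (i : Fin d) : 0 ≤ eigs ρ.1 i := by
  rw [eigs, dif_pos ρ.2.1.1]
  exact ρ.2.1.eigenvalues_nonneg i

theorem vnEnt_le_of_Maj {d : ℕ} {ρ τ : MState d} (h : Maj ρ τ) : vnEnt τ ≤ vnEnt ρ :=
  neg_le_neg (sum_mul_logb_le_of_vMaj (eigs_nonneg ρ) (eigs_nonneg τ) h)

theorem local_continuity_bound_vnEntropy_general
    {d : ℕ} (σ : MState d) (ε : ℝ)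
    (ρstar ρlow : MState d)
    (hρstar : inBall ε σ ρstar ∧ ∀ ω : MState d, inBall ε σ ω → Maj ρstar ω)
    (hρlow : inBall ε σ ρlow ∧ ∀ ω : MState d, inBall ε σ ω → Maj ω ρlow)
    (ω : MState d) (hω : inBall ε σ ω) :
    (vnEnt ρlow ≤ vnEnt ω ∧ vnEnt ω ≤ vnEnt ρstar) ∧
    |vnEnt ω - vnEnt σ| ≤ max (vnEnt ρstar - vnEnt σ) (vnEnt σ - vnEnt ρlow) := by
  have hlow : vnEnt ρlow ≤ vnEnt ω := vnEnt_le_of_Maj (hρlow.2 ω hω)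
  have hstar : vnEnt ω ≤ vnEnt ρstar := vnEnt_le_of_Maj (hρstar.2 ω hω)
  refine ⟨⟨hlow, hstar⟩, abs_sub_le_iff.2 ⟨?_, ?_⟩⟩
  · exact (sub_le_sub_right hstar _).trans (le_max_left _ _)
  · exact (sub_le_sub_left hlow _).trans (le_max_right _ _)

/-- Local continuity bound for the von Neumann entropy: for every
`ω ∈ B_ε(σ)`, `S(ρ_{*,ε}(σ)) ≤ S(ω) ≤ S(ρ*_ε(σ))`, and hence
`|S(ω) − S(σ)| ≤ max { S(ρ*_ε(σ)) − S(σ), S(σ) − S(ρ_{*,ε}(σ)) }`. -/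
theorem local_continuity_bound_vnEntropy
    {d : ℕ} (hd : 1 ≤ d) (σ : MState d) (ε : ℝ) (hε : ε ∈ Set.Ioc (0 : ℝ) 1)
    (ρstar ρlow : MState d)
    (hρstar : inBall ε σ ρstar ∧ ∀ ω : MState d, inBall ε σ ω → Maj ρstar ω)
    (hρlow : inBall ε σ ρlow ∧ ∀ ω : MState d, inBall ε σ ω → Maj ω ρlow)
    (ω : MState d) (hω : inBall ε σ ω) :
    (vnEnt ρlow ≤ vnEnt ω ∧ vnEnt ω ≤ vnEnt ρstar) ∧
    |vnEnt ω - vnEnt σ| ≤ max (vnEnt ρstar - vnEnt σ) (vnEnt σ - vnEnt ρlow) :=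
  local_continuity_bound_vnEntropy_general σ ε ρstar ρlow hρstar hρlow ω hω
end
end

section
/- Let d ≥ 2, let q = (μ₁,…,μ_d) ∈ Δ_d with μ₁ ≥ μ₂ ≥ … ≥ μ_d, let ε ∈ (0,1], and assume (1/2)Σ_{i=1}^d |μ_i − 1/d| > ε. Then there is a unique pair (α₁, n) ∈ [0,1] × {1,…,d−1} such that Σ_{i=d−n+1}^d |α₁ − μ_i| = ε and μ_{d−n+1} < α₁ ≤ μ_{d−n}, and a unique pair (α₂, m) ∈ [0,1] × {1,…,d−1} such that Σ_{j=1}^m |α₂ − μ_j| = ε and μ_{m+1} ≤ α₂ < μ_m. Moreover α₁ = (Σ_{j=d−n+1}^d μ_j + ε)/n, α₂ = (Σ_{j=1}^m μ_j − ε)/m, and α₁ < 1/d < α₂. -/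
/-!
Write `D(a) = ∑ᵢ (a - μᵢ)⁺` and `E(a) = ∑ᵢ (μᵢ - a)⁺`. Because the mean of `μ` is `1/d`,
`D(1/d) = E(1/d) = ½ ∑ᵢ |μᵢ - 1/d| > ε`. `D` is continuous, vanishes at `0` and is strictly
increasing wherever it is positive, so `D(α) = ε` has exactly one solution `α₁`, and `α₁ < 1/d`;
symmetrically `E(α) = ε` has exactly one solution `α₂ ∈ (1/d, 1]`. For non-increasing `μ` the
order conditions on `(α₁, n)` say that the entries below `α₁` are exactly the last `n`, so the
sum condition is `D(α₁) = ε` and `n` is the number of entries below `α₁`; likewise `m` is the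
number of entries above `α₂`. Solving `n α₁ - ∑_{tail} μᵢ = ε` and `∑_{head} μⱼ - m α₂ = ε`
gives the formulas.
-/

open scoped BigOperators

noncomputable section

/-- `lowCond μ ε α n` : `(α, n) = (α₁, n)` satisfies `Σ_{i=d−n+1}^d |α − μᵢ| = ε` and
`μ_{d−n+1} < α ≤ μ_{d−n}` (the latter expressed entrywise, which for non-increasing `μ` is
equivalent). -/
def lowCond {d : ℕ} (μ : Fin d → ℝ) (ε α : ℝ) (n : ℕ) : Prop :=
  0 ≤ α ∧ α ≤ 1 ∧ 1 ≤ n ∧ n ≤ d - 1 ∧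
  (∑ i : Fin d, if d - n ≤ (i : ℕ) then |α - μ i| else 0) = ε ∧
  (∀ i : Fin d, d - n ≤ (i : ℕ) → μ i < α) ∧
  (∀ i : Fin d, (i : ℕ) < d - n → α ≤ μ i)

/-- `highCond μ ε α m` : `(α, m) = (α₂, m)` satisfies `Σ_{j=1}^m |α − μⱼ| = ε` and
`μ_{m+1} ≤ α < μ_m` (the latter expressed entrywise, which for non-increasing `μ` is
equivalent). -/
def highCond {d : ℕ} (μ : Fin d → ℝ) (ε α : ℝ) (m : ℕ) : Prop :=
  0 ≤ α ∧ α ≤ 1 ∧ 1 ≤ m ∧ m ≤ d - 1 ∧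
  (∑ i : Fin d, if (i : ℕ) < m then |α - μ i| else 0) = ε ∧
  (∀ i : Fin d, (i : ℕ) < m → α < μ i) ∧
  (∀ i : Fin d, m ≤ (i : ℕ) → μ i ≤ α)

open Finset

section Gaps

variable {ι : Type*} [Fintype ι]

def deficit (μ : ι → ℝ) (a : ℝ) : ℝ := ∑ i, (a - μ i)⁺

def excess (μ : ι → ℝ) (a : ℝ) : ℝ := ∑ i, (μ i - a)⁺

theorem excess_eq_deficit_neg (μ : ι → ℝ) (a : ℝ) : excess μ a = deficit (-μ) (-a) := by
  simp only [excess, deficit, Pi.neg_apply, neg_sub_neg]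

theorem continuous_deficit (μ : ι → ℝ) : Continuous (deficit μ) :=
  continuous_finsetSum _ fun _ _ => continuous_posPart.comp (continuous_id.sub continuous_const)

theorem sum_posPart_eq_half_sum_abs {f : ι → ℝ} (hf : ∑ i, f i = 0) :
    ∑ i, (f i)⁺ = (∑ i, |f i|) / 2 := by
  have h : ∀ i, |f i| = 2 * (f i)⁺ - f i := fun i => by
    linarith [posPart_add_negPart (f i), posPart_sub_negPart (f i)]
  simp only [h, sum_sub_distrib, ← mul_sum, hf]
  ring

theorem deficit_eq_half_sum_abs {μ : ι → ℝ} {c : ℝ} (hc : ∑ i, μ i = Fintype.card ι * c) :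
    deficit μ c = (∑ i, |μ i - c|) / 2 := by
  simp only [deficit, ← abs_sub_comm c]
  refine sum_posPart_eq_half_sum_abs ?_
  simp [sum_sub_distrib, hc]

theorem excess_eq_half_sum_abs {μ : ι → ℝ} {c : ℝ} (hc : ∑ i, μ i = Fintype.card ι * c) :
    excess μ c = (∑ i, |μ i - c|) / 2 :=
  sum_posPart_eq_half_sum_abs (by simp [sum_sub_distrib, hc])

theorem exists_lt_of_deficit_pos {μ : ι → ℝ} {a : ℝ} (h : 0 < deficit μ a) : ∃ i, μ i < a := by
  obtain ⟨i, -, hi⟩ := exists_lt_of_sum_lt (s := univ) (f := fun _ => (0 : ℝ))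
    (g := fun i => (a - μ i)⁺) (by simpa [deficit] using h)
  exact ⟨i, sub_pos.mp (posPart_pos_iff.mp hi)⟩

theorem exists_lt_of_excess_pos {μ : ι → ℝ} {a : ℝ} (h : 0 < excess μ a) : ∃ i, a < μ i := by
  rw [excess_eq_deficit_neg] at h
  simpa using exists_lt_of_deficit_pos h

theorem deficit_strictMonoOn (μ : ι → ℝ) : StrictMonoOn (deficit μ) {a | 0 < deficit μ a} := by
  intro a ha b _ hab
  obtain ⟨i, hi⟩ := exists_lt_of_deficit_pos ha
  refine sum_lt_sum (fun j _ => posPart_mono (by linarith)) ⟨i, mem_univ i, ?_⟩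
  rw [posPart_eq_self.mpr (by linarith), posPart_eq_self.mpr (by linarith)]
  linarith

theorem excess_strictAntiOn (μ : ι → ℝ) : StrictAntiOn (excess μ) {a | 0 < excess μ a} := by
  intro a ha b hb hab
  have ha' : 0 < deficit (-μ) (-a) := excess_eq_deficit_neg μ a ▸ ha
  have hb' : 0 < deficit (-μ) (-b) := excess_eq_deficit_neg μ b ▸ hb
  simpa only [excess_eq_deficit_neg] using deficit_strictMonoOn (-μ) hb' ha' (neg_lt_neg hab)

theorem exists_deficit_eq {μ : ι → ℝ} {b c ε : ℝ} (hμ : ∀ i, b ≤ μ i) (hbc : b ≤ c)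
    (hε : 0 ≤ ε) (hεc : ε < deficit μ c) : ∃ α ∈ Set.Ico b c, deficit μ α = ε := by
  have hb : deficit μ b = 0 := sum_eq_zero fun i _ => posPart_eq_zero.mpr (by linarith [hμ i])
  obtain ⟨α, ⟨hbα, hαc⟩, hα⟩ := intermediate_value_Icc hbc (continuous_deficit μ).continuousOn
    (show ε ∈ Set.Icc (deficit μ b) (deficit μ c) from ⟨hb ▸ hε, hεc.le⟩)
  exact ⟨α, ⟨hbα, hαc.lt_of_ne (by rintro rfl; linarith)⟩, hα⟩

theorem exists_excess_eq {μ : ι → ℝ} {b c ε : ℝ} (hμ : ∀ i, μ i ≤ b) (hcb : c ≤ b)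
    (hε : 0 ≤ ε) (hεc : ε < excess μ c) : ∃ α ∈ Set.Ioc c b, excess μ α = ε := by
  rw [excess_eq_deficit_neg] at hεc
  obtain ⟨α, ⟨hbα, hαc⟩, hα⟩ :=
    exists_deficit_eq (μ := -μ) (fun i => neg_le_neg (hμ i)) (neg_le_neg hcb) hε hεc
  exact ⟨-α, ⟨lt_neg_of_lt_neg hαc, neg_le.mp hbα⟩, by rwa [excess_eq_deficit_neg, neg_neg]⟩

theorem sum_ite_abs_eq_deficit {μ : ι → ℝ} {α : ℝ} (p : ι → Prop) [DecidablePred p]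
    (hlt : ∀ i, p i → μ i < α) (hge : ∀ i, ¬p i → α ≤ μ i) :
    ∑ i, (if p i then |α - μ i| else 0) = deficit μ α := by
  refine sum_congr rfl fun i _ => ?_
  split_ifs with hi
  · rw [abs_of_pos (sub_pos.mpr (hlt i hi)), posPart_eq_self.mpr (sub_pos.mpr (hlt i hi)).le]
  · exact (posPart_eq_zero.mpr (sub_nonpos.mpr (hge i hi))).symm

theorem sum_ite_abs_eq_excess {μ : ι → ℝ} {α : ℝ} (p : ι → Prop) [DecidablePred p]
    (hgt : ∀ i, p i → α < μ i) (hle : ∀ i, ¬p i → μ i ≤ α) :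
    ∑ i, (if p i then |α - μ i| else 0) = excess μ α := by
  refine sum_congr rfl fun i _ => ?_
  split_ifs with hi
  · rw [abs_sub_comm, abs_of_pos (sub_pos.mpr (hgt i hi)),
      posPart_eq_self.mpr (sub_pos.mpr (hgt i hi)).le]
  · exact (posPart_eq_zero.mpr (sub_nonpos.mpr (hle i hi))).symm

end Gaps

theorem sum_abs_sub_of_lt {ι : Type*} {μ : ι → ℝ} {α : ℝ} {s : Finset ι}
    (h : ∀ i ∈ s, μ i < α) :
    ∑ i ∈ s, |α - μ i| = #s * α - ∑ i ∈ s, μ i := by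
  rw [sum_congr rfl fun i hi => abs_of_pos (sub_pos.mpr (h i hi)), sum_sub_distrib, sum_const,
    nsmul_eq_mul]

theorem sum_abs_sub_of_gt {ι : Type*} {μ : ι → ℝ} {α : ℝ} {s : Finset ι}
    (h : ∀ i ∈ s, α < μ i) :
    ∑ i ∈ s, |α - μ i| = ∑ i ∈ s, μ i - #s * α := by
  rw [sum_congr rfl fun i hi =>
      (abs_sub_comm α (μ i)).trans (abs_of_pos (sub_pos.mpr (h i hi))),
    sum_sub_distrib, sum_const, nsmul_eq_mul]

theorem Fin.iff_lt_card_filter_of_antitone {d : ℕ} {p : Fin d → Prop} [DecidablePred p]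
    (hp : Antitone p) (i : Fin d) : p i ↔ (i : ℕ) < #{j | p j} := by
  constructor
  · intro hi
    have hsub : Iic i ⊆ ({j | p j} : Finset (Fin d)) := fun j hj =>
      mem_filter.mpr ⟨mem_univ j, hp (mem_Iic.mp hj) hi⟩
    have := card_le_card hsub
    rw [Fin.card_Iic] at this
    omega
  · intro hlt
    by_contra hi
    have hsub : ({j | p j} : Finset (Fin d)) ⊆ Iio i := fun j hj =>
      mem_Iio.mpr (lt_of_not_ge fun hij => hi (hp hij (mem_filter.mp hj).2))
    have := card_le_card hsub
    rw [Fin.card_Iio] at this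
    omega

theorem Fin.card_filter_sub_le_val {d n : ℕ} (hn : n ≤ d) :
    #{i : Fin d | d - n ≤ (i : ℕ)} = n := by
  have h := card_filter_add_card_filter_not (s := (univ : Finset (Fin d)))
    fun i : Fin d => (i : ℕ) < d - n
  simp only [Fin.card_filter_val_lt, not_lt, card_univ, Fintype.card_fin] at h
  omega

section Conditions

variable {d : ℕ} {μ : Fin d → ℝ} {ε α α' : ℝ}

theorem lowCond.deficit_eq {n : ℕ} (h : lowCond μ ε α n) : deficit μ α = ε := by
  obtain ⟨-, -, -, -, hsum, hlt, hge⟩ := h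
  rw [← hsum, sum_ite_abs_eq_deficit _ hlt fun i hi => hge i (not_le.mp hi)]

theorem lowCond.eq_div {n : ℕ} (h : lowCond μ ε α n) :
    α = ((∑ i : Fin d, if d - n ≤ (i : ℕ) then μ i else 0) + ε) / n := by
  obtain ⟨-, -, hn1, hnd, hsum, hlt, -⟩ := h
  rw [← sum_filter, sum_abs_sub_of_lt fun i hi => hlt i (mem_filter.mp hi).2,
    Fin.card_filter_sub_le_val (by omega)] at hsum
  rw [← sum_filter, eq_div_iff (by exact_mod_cast (by omega : n ≠ 0))]
  linarith

theorem lowCond.eq_of_deficit_eq {n : ℕ} (h : lowCond μ ε α' n) (hε : 0 < ε)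
    (hα : deficit μ α = ε) : α' = α ∧ n = d - #{i | α ≤ μ i} := by
  have hα' := h.deficit_eq
  obtain rfl : α' = α :=
    (deficit_strictMonoOn μ).injOn (hα' ▸ hε : 0 < deficit μ α') (hα ▸ hε : 0 < deficit μ α)
      (hα'.trans hα.symm)
  obtain ⟨-, -, -, hnd, -, hlt, hge⟩ := h
  have hfilter :
      ({i | α' ≤ μ i} : Finset (Fin d)) = ({i | (i : ℕ) < d - n} : Finset (Fin d)) := by
    ext i
    simp only [mem_filter, mem_univ, true_and]
    exact ⟨fun hi => lt_of_not_ge fun h' => (hlt i h').not_ge hi, hge i⟩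
  refine ⟨rfl, ?_⟩
  rw [hfilter, Fin.card_filter_val_lt]
  omega

theorem lowCond_of_deficit_eq (hμ : Antitone μ) (h0 : 0 ≤ α) (h1 : α ≤ 1) (hε : 0 < ε)
    (hα : deficit μ α = ε) (hbig : ∃ i, α ≤ μ i) : lowCond μ ε α (d - #{i | α ≤ μ i}) := by
  set k := #{i | α ≤ μ i}
  have hiff := Fin.iff_lt_card_filter_of_antitone (p := fun i => α ≤ μ i)
    fun i j hij h => h.trans (hμ hij)
  obtain ⟨i₀, hi₀⟩ := hbig
  obtain ⟨j₀, hj₀⟩ := exists_lt_of_deficit_pos (hα ▸ hε)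
  have hk_pos : (i₀ : ℕ) < k := (hiff i₀).mp hi₀
  have hk_lt : k ≤ j₀ := not_lt.mp fun h => hj₀.not_ge ((hiff j₀).mpr h)
  have hdk : d - (d - k) = k := by omega
  refine ⟨h0, h1, by omega, by omega, ?_, ?_, ?_⟩ <;> simp only [hdk]
  · rw [sum_ite_abs_eq_deficit _ (fun i hi => lt_of_not_ge fun h => hi.not_gt ((hiff i).mp h))
      fun i hi => (hiff i).mpr (not_le.mp hi), hα]
  · exact fun i hi => lt_of_not_ge fun h => hi.not_gt ((hiff i).mp h)
  · exact fun i hi => (hiff i).mpr hi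

theorem highCond.excess_eq {m : ℕ} (h : highCond μ ε α m) : excess μ α = ε := by
  obtain ⟨-, -, -, -, hsum, hgt, hle⟩ := h
  rw [← hsum, sum_ite_abs_eq_excess _ hgt fun i hi => hle i (not_lt.mp hi)]

theorem highCond.eq_div {m : ℕ} (h : highCond μ ε α m) :
    α = ((∑ i : Fin d, if (i : ℕ) < m then μ i else 0) - ε) / m := by
  obtain ⟨-, -, hm1, hmd, hsum, hgt, -⟩ := h
  rw [← sum_filter, sum_abs_sub_of_gt fun i hi => hgt i (mem_filter.mp hi).2,
    Fin.card_filter_val_lt, min_eq_right (by omega)] at hsum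
  rw [← sum_filter, eq_div_iff (by exact_mod_cast (by omega : m ≠ 0))]
  linarith

theorem highCond.eq_of_excess_eq {m : ℕ} (h : highCond μ ε α' m) (hε : 0 < ε)
    (hα : excess μ α = ε) : α' = α ∧ m = #{i | α < μ i} := by
  have hα' := h.excess_eq
  obtain rfl : α' = α :=
    (excess_strictAntiOn μ).injOn (hα' ▸ hε : 0 < excess μ α') (hα ▸ hε : 0 < excess μ α)
      (hα'.trans hα.symm)
  obtain ⟨-, -, -, hmd, -, hgt, hle⟩ := h
  have hfilter :
      ({i | α' < μ i} : Finset (Fin d)) = ({i | (i : ℕ) < m} : Finset (Fin d)) := by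
    ext i
    simp only [mem_filter, mem_univ, true_and]
    exact ⟨fun hi => lt_of_not_ge fun h' => (hle i h').not_gt hi, hgt i⟩
  refine ⟨rfl, ?_⟩
  rw [hfilter, Fin.card_filter_val_lt]
  omega

theorem highCond_of_excess_eq (hμ : Antitone μ) (h0 : 0 ≤ α) (h1 : α ≤ 1) (hε : 0 < ε)
    (hα : excess μ α = ε) (hsmall : ∃ i, μ i ≤ α) : highCond μ ε α #{i | α < μ i} := by
  have hiff := Fin.iff_lt_card_filter_of_antitone (p := fun i => α < μ i)
    fun i j hij h => h.trans_le (hμ hij)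
  obtain ⟨i₀, hi₀⟩ := hsmall
  obtain ⟨j₀, hj₀⟩ := exists_lt_of_excess_pos (hα ▸ hε)
  have hm_pos : (j₀ : ℕ) < #{i | α < μ i} := (hiff j₀).mp hj₀
  have hm_lt : #{i | α < μ i} ≤ i₀ := not_lt.mp fun h => hi₀.not_gt ((hiff i₀).mpr h)
  refine ⟨h0, h1, by omega, by omega, ?_, fun i hi => (hiff i).mpr hi,
    fun i hi => not_lt.mp fun h => hi.not_gt ((hiff i).mp h)⟩
  rw [sum_ite_abs_eq_excess _ (fun i hi => (hiff i).mpr hi)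
    fun i hi => not_lt.mp fun h => hi ((hiff i).mp h), hα]

end Conditions

theorem exists_unique_alpha_pairs_general
    {d : ℕ} (μ : Fin d → ℝ)
    (hμ0 : ∀ i, 0 ≤ μ i) (hμ1 : ∑ i, μ i = 1)
    (hsort : ∀ i j : Fin d, i ≤ j → μ j ≤ μ i)
    (ε : ℝ) (hε : ε ∈ Set.Ioc (0 : ℝ) 1)
    (hfar : ε < (1 / 2 : ℝ) * ∑ i, |μ i - 1 / d|) :
    ∃ (α₁ : ℝ) (n : ℕ) (α₂ : ℝ) (m : ℕ),
      lowCond μ ε α₁ n ∧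
      (∀ (α₁' : ℝ) (n' : ℕ), lowCond μ ε α₁' n' → α₁' = α₁ ∧ n' = n) ∧
      highCond μ ε α₂ m ∧
      (∀ (α₂' : ℝ) (m' : ℕ), highCond μ ε α₂' m' → α₂' = α₂ ∧ m' = m) ∧
      α₁ = ((∑ i : Fin d, if d - n ≤ (i : ℕ) then μ i else 0) + ε) / n ∧
      α₂ = ((∑ i : Fin d, if (i : ℕ) < m then μ i else 0) - ε) / m ∧
      α₁ < 1 / d ∧ 1 / d < α₂ := by
  have hd : 0 < d := Nat.pos_of_ne_zero fun hd => by
    subst hd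
    simp only [univ_eq_empty, sum_empty, mul_zero] at hfar
    linarith [hε.1]
  have hc0 : (0 : ℝ) ≤ 1 / d := by positivity
  have hc1 : (1 / d : ℝ) ≤ 1 := div_le_one_of_le₀ (by exact_mod_cast hd) (by positivity)
  have hmean : ∑ i, μ i = Fintype.card (Fin d) * (1 / d : ℝ) := by
    rw [hμ1, Fintype.card_fin]
    field_simp
  have hne : (univ : Finset (Fin d)).Nonempty := ⟨⟨0, hd⟩, mem_univ _⟩
  obtain ⟨i, -, hi⟩ :=
    exists_le_of_sum_le hne (f := fun _ => (1 / d : ℝ)) (g := μ) (by simp [hmean])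
  obtain ⟨j, -, hj⟩ :=
    exists_le_of_sum_le hne (f := μ) (g := fun _ => (1 / d : ℝ)) (by simp [hmean])
  obtain ⟨α₁, ⟨hα₁0, hα₁c⟩, hα₁⟩ := exists_deficit_eq (c := 1 / d) hμ0 hc0 hε.1.le
    (by rw [deficit_eq_half_sum_abs hmean]; linarith)
  obtain ⟨α₂, ⟨hα₂c, hα₂1⟩, hα₂⟩ := exists_excess_eq (c := 1 / d)
    (fun i => hμ1 ▸ single_le_sum (fun j _ => hμ0 j) (mem_univ i)) hc1 hε.1.le
    (by rw [excess_eq_half_sum_abs hmean]; linarith)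
  have low := lowCond_of_deficit_eq hsort hα₁0 (by linarith) hε.1 hα₁ ⟨i, by linarith⟩
  have high := highCond_of_excess_eq hsort (by linarith) hα₂1 hε.1 hα₂ ⟨j, by linarith⟩
  exact ⟨α₁, _, α₂, _, low, fun _ _ h => h.eq_of_deficit_eq hε.1 hα₁,
    high, fun _ _ h => h.eq_of_excess_eq hε.1 hα₂, low.eq_div, high.eq_div, hα₁c, hα₂c⟩

/-- Existence and uniqueness of the pairs `(α₁, n)` and `(α₂, m)` of
Lemma 10, together with the explicit formulas for `α₁, α₂` and the bounds
`α₁ < 1/d < α₂`. -/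
theorem exists_unique_alpha_pairs
    {d : ℕ} (hd : 2 ≤ d) (μ : Fin d → ℝ)
    (hμ0 : ∀ i, 0 ≤ μ i) (hμ1 : ∑ i, μ i = 1)
    (hsort : ∀ i j : Fin d, i ≤ j → μ j ≤ μ i)
    (ε : ℝ) (hε : ε ∈ Set.Ioc (0 : ℝ) 1)
    (hfar : ε < (1 / 2 : ℝ) * ∑ i, |μ i - 1 / d|) :
    ∃ (α₁ : ℝ) (n : ℕ) (α₂ : ℝ) (m : ℕ),
      lowCond μ ε α₁ n ∧
      (∀ (α₁' : ℝ) (n' : ℕ), lowCond μ ε α₁' n' → α₁' = α₁ ∧ n' = n) ∧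
      highCond μ ε α₂ m ∧
      (∀ (α₂' : ℝ) (m' : ℕ), highCond μ ε α₂' m' → α₂' = α₂ ∧ m' = m) ∧
      α₁ = ((∑ i : Fin d, if d - n ≤ (i : ℕ) then μ i else 0) + ε) / n ∧
      α₂ = ((∑ i : Fin d, if (i : ℕ) < m then μ i else 0) - ε) / m ∧
      α₁ < 1 / d ∧ 1 / d < α₂ :=
  exists_unique_alpha_pairs_general μ hμ0 hμ1 hsort ε hε hfar
end
end
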